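/- arXiv:math/9903170 — 2 statements merged into one kernel-verified Lean document; each statement's English description precedes it below -/
import Mathlib

section
/- Let A₁(n) denote the number of permutations of length n containing no 132 pattern and exactly one 123 pattern. Then in ℚ[[z]], the generating function F₁(z) = ∑_{n≥0} A₁(n)·zⁿ satisfies (1 - 2z)²·F₁(z) = z³. -/
/-- The number of 132 patterns of a permutation `π` of `Fin n`:
triples of indices `i₁ < i₂ < i₃` with `π i₁ < π i₃ < π i₂`. -/
def count132 {n : ℕ} (π : Equiv.Perm (Fin n)) : ℕ :=
  (Finset.univ.filter (fun p : Fin n × Fin n × Fin n =>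
    p.1 < p.2.1 ∧ p.2.1 < p.2.2 ∧ π p.1 < π p.2.2 ∧ π p.2.2 < π p.2.1)).card

/-- The number of 123 patterns of a permutation `π` of `Fin n`:
triples of indices `i₁ < i₂ < i₃` with `π i₁ < π i₂ < π i₃`. -/
def count123 {n : ℕ} (π : Equiv.Perm (Fin n)) : ℕ :=
  (Finset.univ.filter (fun p : Fin n × Fin n × Fin n =>
    p.1 < p.2.1 ∧ p.2.1 < p.2.2 ∧ π p.1 < π p.2.1 ∧ π p.2.1 < π p.2.2)).card

/-- The number of 12 patterns of a permutation `π` of `Fin n`: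
pairs of indices `i₁ < i₂` with `π i₁ < π i₂`. -/
def count12 {n : ℕ} (π : Equiv.Perm (Fin n)) : ℕ :=
  (Finset.univ.filter (fun p : Fin n × Fin n =>
    p.1 < p.2 ∧ π p.1 < π p.2)).card

/-- The number of permutations of length n with no 132 pattern and exactly 1 123 patterns. -/
def A (n : ℕ) : ℕ :=
  (Finset.univ.filter (fun π : Equiv.Perm (Fin n) =>
    count132 π = 0 ∧ count123 π = 1)).card

open Finset Equiv PowerSeries

namespace NPat

def cnt132 (f : ℕ → ℕ) (n : ℕ) : ℕ :=
  ((range n ×ˢ range n ×ˢ range n).filter (fun p =>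
    p.1 < p.2.1 ∧ p.2.1 < p.2.2 ∧ f p.1 < f p.2.2 ∧ f p.2.2 < f p.2.1)).card

def cnt123 (f : ℕ → ℕ) (n : ℕ) : ℕ :=
  ((range n ×ˢ range n ×ˢ range n).filter (fun p =>
    p.1 < p.2.1 ∧ p.2.1 < p.2.2 ∧ f p.1 < f p.2.1 ∧ f p.2.1 < f p.2.2)).card

def cnt12 (f : ℕ → ℕ) (n : ℕ) : ℕ :=
  ((range n ×ˢ range n).filter (fun p => p.1 < p.2 ∧ f p.1 < f p.2)).card

def fval {n : ℕ} (π : Perm (Fin n)) : ℕ → ℕ := fun i => if h : i < n then (π ⟨i, h⟩).val else 0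

lemma fval_val {n : ℕ} (π : Perm (Fin n)) (i : Fin n) : fval π i.val = (π i).val := by
  simp [fval]

lemma card_fin_triple {n : ℕ} (P : ℕ → ℕ → ℕ → Prop) [∀ a b c, Decidable (P a b c)] :
    (univ.filter fun p : Fin n × Fin n × Fin n => P p.1.val p.2.1.val p.2.2.val).card
    = ((range n ×ˢ range n ×ˢ range n).filter fun p => P p.1 p.2.1 p.2.2).card := by
  apply Finset.card_bij (fun p _ => (p.1.val, p.2.1.val, p.2.2.val))
  · rintro ⟨a, b, c⟩ h
    simp only [mem_filter, mem_univ, true_and] at h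
    simp [mem_filter, mem_product, a.isLt, b.isLt, c.isLt, h]
  · rintro ⟨a, b, c⟩ _ ⟨a', b', c'⟩ _ h
    simp only [Prod.mk.injEq] at h
    ext <;> simp [h.1, h.2.1, h.2.2]
  · rintro ⟨a, b, c⟩ h
    simp only [mem_filter, mem_product, mem_range] at h
    exact ⟨(⟨a, h.1.1⟩, ⟨b, h.1.2.1⟩, ⟨c, h.1.2.2⟩), by simpa using h.2, rfl⟩

lemma card_fin_pair {n : ℕ} (P : ℕ → ℕ → Prop) [∀ a b, Decidable (P a b)] :
    (univ.filter fun p : Fin n × Fin n => P p.1.val p.2.val).card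
    = ((range n ×ˢ range n).filter fun p => P p.1 p.2).card := by
  apply Finset.card_bij (fun p _ => (p.1.val, p.2.val))
  · rintro ⟨a, b⟩ h
    simp only [mem_filter, mem_univ, true_and] at h
    simp [mem_filter, mem_product, a.isLt, b.isLt, h]
  · rintro ⟨a, b⟩ _ ⟨a', b'⟩ _ h
    simp only [Prod.mk.injEq] at h
    ext <;> simp [h.1, h.2]
  · rintro ⟨a, b⟩ h
    simp only [mem_filter, mem_product, mem_range] at h
    exact ⟨(⟨a, h.1.1⟩, ⟨b, h.1.2⟩), by simpa using h.2, rfl⟩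

lemma count132_eq {n : ℕ} (π : Perm (Fin n)) : count132 π = cnt132 (fval π) n := by
  rw [count132, cnt132, ← card_fin_triple (fun a b c =>
    a < b ∧ b < c ∧ fval π a < fval π c ∧ fval π c < fval π b)]
  apply congrArg
  apply filter_congr
  rintro ⟨a, b, c⟩ _
  simp only [Fin.lt_def, fval_val]

lemma count123_eq {n : ℕ} (π : Perm (Fin n)) : count123 π = cnt123 (fval π) n := by
  rw [count123, cnt123, ← card_fin_triple (fun a b c =>
    a < b ∧ b < c ∧ fval π a < fval π b ∧ fval π b < fval π c)]
  apply congrArg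
  apply filter_congr
  rintro ⟨a, b, c⟩ _
  simp only [Fin.lt_def, fval_val]

lemma count12_eq {n : ℕ} (π : Perm (Fin n)) : count12 π = cnt12 (fval π) n := by
  rw [count12, cnt12, ← card_fin_pair (fun a b => a < b ∧ fval π a < fval π b)]
  apply congrArg
  apply filter_congr
  rintro ⟨a, b⟩ _
  simp only [Fin.lt_def, fval_val]

end NPat

namespace NPat

lemma sum_range_add' (f : ℕ → ℕ) (a b : ℕ) :
    ∑ i ∈ range (a + b), f i = ∑ i ∈ range a, f i + ∑ i ∈ range b, f (a + i) := by
  induction b with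
  | zero => simp
  | succ b ih => rw [← Nat.add_assoc, sum_range_succ, sum_range_succ, ih, add_assoc]

lemma sum3_congr {a b c : ℕ} {F G : ℕ → ℕ → ℕ → ℕ}
    (H : ∀ i < a, ∀ j < b, ∀ k < c, F i j k = G i j k) :
    ∑ i ∈ range a, ∑ j ∈ range b, ∑ k ∈ range c, F i j k
      = ∑ i ∈ range a, ∑ j ∈ range b, ∑ k ∈ range c, G i j k :=
  sum_congr rfl fun i hi => sum_congr rfl fun j hj => sum_congr rfl fun k hk =>
    H i (mem_range.1 hi) j (mem_range.1 hj) k (mem_range.1 hk)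

lemma sum3_zero {a b c : ℕ} {F : ℕ → ℕ → ℕ → ℕ}
    (H : ∀ i < a, ∀ j < b, ∀ k < c, F i j k = 0) :
    ∑ i ∈ range a, ∑ j ∈ range b, ∑ k ∈ range c, F i j k = 0 :=
  sum_eq_zero fun i hi => sum_eq_zero fun j hj => sum_eq_zero fun k hk =>
    H i (mem_range.1 hi) j (mem_range.1 hj) k (mem_range.1 hk)

lemma sum2_congr {a b : ℕ} {F G : ℕ → ℕ → ℕ}
    (H : ∀ i < a, ∀ j < b, F i j = G i j) :
    ∑ i ∈ range a, ∑ j ∈ range b, F i j = ∑ i ∈ range a, ∑ j ∈ range b, G i j :=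
  sum_congr rfl fun i hi => sum_congr rfl fun j hj => H i (mem_range.1 hi) j (mem_range.1 hj)

lemma sum2_zero {a b : ℕ} {F : ℕ → ℕ → ℕ}
    (H : ∀ i < a, ∀ j < b, F i j = 0) :
    ∑ i ∈ range a, ∑ j ∈ range b, F i j = 0 :=
  sum_eq_zero fun i hi => sum_eq_zero fun j hj => H i (mem_range.1 hi) j (mem_range.1 hj)

lemma triple_split (F : ℕ → ℕ → ℕ → ℕ) (a b : ℕ) :
    ∑ i ∈ range (a + b), ∑ j ∈ range (a + b), ∑ k ∈ range (a + b), F i j k =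
      (∑ i ∈ range a, ∑ j ∈ range a, ∑ k ∈ range a, F i j k) +
      (∑ i ∈ range a, ∑ j ∈ range a, ∑ k ∈ range b, F i j (a + k)) +
      (∑ i ∈ range a, ∑ j ∈ range b, ∑ k ∈ range a, F i (a + j) k) +
      (∑ i ∈ range a, ∑ j ∈ range b, ∑ k ∈ range b, F i (a + j) (a + k)) +
      (∑ i ∈ range b, ∑ j ∈ range a, ∑ k ∈ range a, F (a + i) j k) +
      (∑ i ∈ range b, ∑ j ∈ range a, ∑ k ∈ range b, F (a + i) j (a + k)) +
      (∑ i ∈ range b, ∑ j ∈ range b, ∑ k ∈ range a, F (a + i) (a + j) k) +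
      (∑ i ∈ range b, ∑ j ∈ range b, ∑ k ∈ range b, F (a + i) (a + j) (a + k)) := by
  simp only [sum_range_add', sum_add_distrib]
  ring

lemma pair_split (F : ℕ → ℕ → ℕ) (a b : ℕ) :
    ∑ i ∈ range (a + b), ∑ j ∈ range (a + b), F i j =
      (∑ i ∈ range a, ∑ j ∈ range a, F i j) +
      (∑ i ∈ range a, ∑ j ∈ range b, F i (a + j)) +
      (∑ i ∈ range b, ∑ j ∈ range a, F (a + i) j) +
      (∑ i ∈ range b, ∑ j ∈ range b, F (a + i) (a + j)) := by
  simp only [sum_range_add', sum_add_distrib]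
  ring

lemma triple_split_succ (F : ℕ → ℕ → ℕ → ℕ) (a : ℕ) :
    ∑ i ∈ range (a + 1), ∑ j ∈ range (a + 1), ∑ k ∈ range (a + 1), F i j k =
      (∑ i ∈ range a, ∑ j ∈ range a, ∑ k ∈ range a, F i j k) +
      (∑ i ∈ range a, ∑ j ∈ range a, F i j a) +
      (∑ i ∈ range a, ∑ k ∈ range a, F i a k) +
      (∑ i ∈ range a, F i a a) +
      (∑ j ∈ range a, ∑ k ∈ range a, F a j k) +
      (∑ j ∈ range a, F a j a) +
      (∑ k ∈ range a, F a a k) +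
      F a a a := by
  simp only [sum_range_succ, sum_add_distrib]
  ring

lemma pair_split_succ (F : ℕ → ℕ → ℕ) (a : ℕ) :
    ∑ i ∈ range (a + 1), ∑ j ∈ range (a + 1), F i j =
      (∑ i ∈ range a, ∑ j ∈ range a, F i j) +
      (∑ i ∈ range a, F i a) + (∑ j ∈ range a, F a j) + F a a := by
  simp only [sum_range_succ, sum_add_distrib]
  ring

end NPat

namespace NPat

lemma cnt132_sum (f : ℕ → ℕ) (n : ℕ) :
    cnt132 f n = ∑ i ∈ range n, ∑ j ∈ range n, ∑ k ∈ range n,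
      if i < j ∧ j < k ∧ f i < f k ∧ f k < f j then 1 else 0 := by
  rw [cnt132, card_filter]
  simp only [Finset.sum_product]

lemma cnt123_sum (f : ℕ → ℕ) (n : ℕ) :
    cnt123 f n = ∑ i ∈ range n, ∑ j ∈ range n, ∑ k ∈ range n,
      if i < j ∧ j < k ∧ f i < f j ∧ f j < f k then 1 else 0 := by
  rw [cnt123, card_filter]
  simp only [Finset.sum_product]

lemma cnt12_sum (f : ℕ → ℕ) (n : ℕ) :
    cnt12 f n = ∑ i ∈ range n, ∑ j ∈ range n,
      if i < j ∧ f i < f j then 1 else 0 := by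
  rw [cnt12, card_filter]
  simp only [Finset.sum_product]

section Block

variable {a b : ℕ} {f g h : ℕ → ℕ}
variable (H1 : ∀ i < a, h i = b + f i) (H2 : ∀ j < b, h (a + j) = g j)
variable (H3 : ∀ j < b, g j < b)

include H1 H2 H3 in
lemma block132 : cnt132 h (a + b) = cnt132 f a + cnt132 g b := by
  rw [cnt132_sum, cnt132_sum, cnt132_sum, triple_split]
  have t1 : (∑ i ∈ range a, ∑ j ∈ range a, ∑ k ∈ range a,
      if i < j ∧ j < k ∧ h i < h k ∧ h k < h j then 1 else 0)
      = ∑ i ∈ range a, ∑ j ∈ range a, ∑ k ∈ range a,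
      if i < j ∧ j < k ∧ f i < f k ∧ f k < f j then 1 else 0 :=
    sum3_congr fun i hi j hj k hk => by
      rw [H1 i hi, H1 j hj, H1 k hk]; exact if_congr (by omega) rfl rfl
  have t2 : (∑ i ∈ range a, ∑ j ∈ range a, ∑ k ∈ range b,
      if i < j ∧ j < a + k ∧ h i < h (a + k) ∧ h (a + k) < h j then 1 else 0) = 0 :=
    sum3_zero fun i hi j hj k hk => by
      rw [H1 i hi, H1 j hj, H2 k hk]; have := H3 k hk; exact if_neg (by omega)
  have t3 : (∑ i ∈ range a, ∑ j ∈ range b, ∑ k ∈ range a,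
      if i < a + j ∧ a + j < k ∧ h i < h k ∧ h k < h (a + j) then 1 else 0) = 0 :=
    sum3_zero fun i hi j hj k hk => if_neg (by omega)
  have t4 : (∑ i ∈ range a, ∑ j ∈ range b, ∑ k ∈ range b,
      if i < a + j ∧ a + j < a + k ∧ h i < h (a + k) ∧ h (a + k) < h (a + j) then 1 else 0)
      = 0 :=
    sum3_zero fun i hi j hj k hk => by
      rw [H1 i hi, H2 k hk]; have := H3 k hk; exact if_neg (by omega)
  have t5 : (∑ i ∈ range b, ∑ j ∈ range a, ∑ k ∈ range a,
      if a + i < j ∧ j < k ∧ h (a + i) < h k ∧ h k < h j then 1 else 0) = 0 :=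
    sum3_zero fun i hi j hj k hk => if_neg (by omega)
  have t6 : (∑ i ∈ range b, ∑ j ∈ range a, ∑ k ∈ range b,
      if a + i < j ∧ j < a + k ∧ h (a + i) < h (a + k) ∧ h (a + k) < h j then 1 else 0) = 0 :=
    sum3_zero fun i hi j hj k hk => if_neg (by omega)
  have t7 : (∑ i ∈ range b, ∑ j ∈ range b, ∑ k ∈ range a,
      if a + i < a + j ∧ a + j < k ∧ h (a + i) < h k ∧ h k < h (a + j) then 1 else 0) = 0 :=
    sum3_zero fun i hi j hj k hk => if_neg (by omega)
  have t8 : (∑ i ∈ range b, ∑ j ∈ range b, ∑ k ∈ range b,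
      if a + i < a + j ∧ a + j < a + k ∧ h (a + i) < h (a + k) ∧ h (a + k) < h (a + j)
        then 1 else 0)
      = ∑ i ∈ range b, ∑ j ∈ range b, ∑ k ∈ range b,
      if i < j ∧ j < k ∧ g i < g k ∧ g k < g j then 1 else 0 :=
    sum3_congr fun i hi j hj k hk => by
      rw [H2 i hi, H2 j hj, H2 k hk]; exact if_congr (by omega) rfl rfl
  rw [t1, t2, t3, t4, t5, t6, t7, t8]
  ring

include H1 H2 H3 in
lemma block123 : cnt123 h (a + b) = cnt123 f a + cnt123 g b := by
  rw [cnt123_sum, cnt123_sum, cnt123_sum, triple_split]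
  have t1 : (∑ i ∈ range a, ∑ j ∈ range a, ∑ k ∈ range a,
      if i < j ∧ j < k ∧ h i < h j ∧ h j < h k then 1 else 0)
      = ∑ i ∈ range a, ∑ j ∈ range a, ∑ k ∈ range a,
      if i < j ∧ j < k ∧ f i < f j ∧ f j < f k then 1 else 0 :=
    sum3_congr fun i hi j hj k hk => by
      rw [H1 i hi, H1 j hj, H1 k hk]; exact if_congr (by omega) rfl rfl
  have t2 : (∑ i ∈ range a, ∑ j ∈ range a, ∑ k ∈ range b,
      if i < j ∧ j < a + k ∧ h i < h j ∧ h j < h (a + k) then 1 else 0) = 0 :=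
    sum3_zero fun i hi j hj k hk => by
      rw [H1 j hj, H2 k hk]; have := H3 k hk; exact if_neg (by omega)
  have t3 : (∑ i ∈ range a, ∑ j ∈ range b, ∑ k ∈ range a,
      if i < a + j ∧ a + j < k ∧ h i < h (a + j) ∧ h (a + j) < h k then 1 else 0) = 0 :=
    sum3_zero fun i hi j hj k hk => if_neg (by omega)
  have t4 : (∑ i ∈ range a, ∑ j ∈ range b, ∑ k ∈ range b,
      if i < a + j ∧ a + j < a + k ∧ h i < h (a + j) ∧ h (a + j) < h (a + k) then 1 else 0)
      = 0 :=
    sum3_zero fun i hi j hj k hk => by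
      rw [H1 i hi, H2 j hj]; have := H3 j hj; exact if_neg (by omega)
  have t5 : (∑ i ∈ range b, ∑ j ∈ range a, ∑ k ∈ range a,
      if a + i < j ∧ j < k ∧ h (a + i) < h j ∧ h j < h k then 1 else 0) = 0 :=
    sum3_zero fun i hi j hj k hk => if_neg (by omega)
  have t6 : (∑ i ∈ range b, ∑ j ∈ range a, ∑ k ∈ range b,
      if a + i < j ∧ j < a + k ∧ h (a + i) < h j ∧ h j < h (a + k) then 1 else 0) = 0 :=
    sum3_zero fun i hi j hj k hk => if_neg (by omega)
  have t7 : (∑ i ∈ range b, ∑ j ∈ range b, ∑ k ∈ range a,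
      if a + i < a + j ∧ a + j < k ∧ h (a + i) < h (a + j) ∧ h (a + j) < h k then 1 else 0)
      = 0 :=
    sum3_zero fun i hi j hj k hk => if_neg (by omega)
  have t8 : (∑ i ∈ range b, ∑ j ∈ range b, ∑ k ∈ range b,
      if a + i < a + j ∧ a + j < a + k ∧ h (a + i) < h (a + j) ∧ h (a + j) < h (a + k)
        then 1 else 0)
      = ∑ i ∈ range b, ∑ j ∈ range b, ∑ k ∈ range b,
      if i < j ∧ j < k ∧ g i < g j ∧ g j < g k then 1 else 0 :=
    sum3_congr fun i hi j hj k hk => by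
      rw [H2 i hi, H2 j hj, H2 k hk]; exact if_congr (by omega) rfl rfl
  rw [t1, t2, t3, t4, t5, t6, t7, t8]
  ring

include H1 H2 H3 in
lemma block12 : cnt12 h (a + b) = cnt12 f a + cnt12 g b := by
  rw [cnt12_sum, cnt12_sum, cnt12_sum, pair_split]
  have t1 : (∑ i ∈ range a, ∑ j ∈ range a, if i < j ∧ h i < h j then 1 else 0)
      = ∑ i ∈ range a, ∑ j ∈ range a, if i < j ∧ f i < f j then 1 else 0 :=
    sum2_congr fun i hi j hj => by
      rw [H1 i hi, H1 j hj]; exact if_congr (by omega) rfl rfl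
  have t2 : (∑ i ∈ range a, ∑ j ∈ range b, if i < a + j ∧ h i < h (a + j) then 1 else 0)
      = 0 :=
    sum2_zero fun i hi j hj => by
      rw [H1 i hi, H2 j hj]; have := H3 j hj; exact if_neg (by omega)
  have t3 : (∑ i ∈ range b, ∑ j ∈ range a, if a + i < j ∧ h (a + i) < h j then 1 else 0)
      = 0 :=
    sum2_zero fun i hi j hj => if_neg (by omega)
  have t4 : (∑ i ∈ range b, ∑ j ∈ range b,
      if a + i < a + j ∧ h (a + i) < h (a + j) then 1 else 0)
      = ∑ i ∈ range b, ∑ j ∈ range b, if i < j ∧ g i < g j then 1 else 0 :=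
    sum2_congr fun i hi j hj => by
      rw [H2 i hi, H2 j hj]; exact if_congr (by omega) rfl rfl
  rw [t1, t2, t3, t4]
  ring

end Block

section ExtMax

variable {k M : ℕ} {f h : ℕ → ℕ}
variable (H1 : ∀ i < k, h i = f i) (H2 : h k = M) (H3 : ∀ i < k, f i < M)

include H1 H2 H3 in
lemma ext132 : cnt132 h (k + 1) = cnt132 f k := by
  rw [cnt132_sum, cnt132_sum, triple_split_succ]
  have t1 : (∑ i ∈ range k, ∑ j ∈ range k, ∑ l ∈ range k,
      if i < j ∧ j < l ∧ h i < h l ∧ h l < h j then 1 else 0)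
      = ∑ i ∈ range k, ∑ j ∈ range k, ∑ l ∈ range k,
      if i < j ∧ j < l ∧ f i < f l ∧ f l < f j then 1 else 0 :=
    sum3_congr fun i hi j hj l hl => by
      rw [H1 i hi, H1 j hj, H1 l hl]
  have t2 : (∑ i ∈ range k, ∑ j ∈ range k,
      if i < j ∧ j < k ∧ h i < h k ∧ h k < h j then 1 else 0) = 0 :=
    sum2_zero fun i hi j hj => by
      rw [H1 j hj, H2]; have := H3 j hj; exact if_neg (by omega)
  have t3 : (∑ i ∈ range k, ∑ l ∈ range k,
      if i < k ∧ k < l ∧ h i < h l ∧ h l < h k then 1 else 0) = 0 :=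
    sum2_zero fun i hi l hl => if_neg (by omega)
  have t4 : (∑ i ∈ range k, if i < k ∧ k < k ∧ h i < h k ∧ h k < h k then 1 else 0) = 0 :=
    sum_eq_zero fun i _ => if_neg (by omega)
  have t5 : (∑ j ∈ range k, ∑ l ∈ range k,
      if k < j ∧ j < l ∧ h k < h l ∧ h l < h j then 1 else 0) = 0 :=
    sum2_zero fun j hj l hl => if_neg (by omega)
  have t6 : (∑ j ∈ range k, if k < j ∧ j < k ∧ h k < h k ∧ h k < h j then 1 else 0) = 0 :=
    sum_eq_zero fun j hj => if_neg (by omega)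
  have t7 : (∑ l ∈ range k, if k < k ∧ k < l ∧ h k < h l ∧ h l < h k then 1 else 0) = 0 :=
    sum_eq_zero fun l _ => if_neg (by omega)
  have t8 : (if k < k ∧ k < k ∧ h k < h k ∧ h k < h k then 1 else 0) = 0 :=
    if_neg (by omega)
  rw [t1, t2, t3, t4, t5, t6, t7, t8]
  ring

include H1 H2 H3 in
lemma ext123 : cnt123 h (k + 1) = cnt123 f k + cnt12 f k := by
  rw [cnt123_sum, cnt123_sum, cnt12_sum, triple_split_succ]
  have t1 : (∑ i ∈ range k, ∑ j ∈ range k, ∑ l ∈ range k,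
      if i < j ∧ j < l ∧ h i < h j ∧ h j < h l then 1 else 0)
      = ∑ i ∈ range k, ∑ j ∈ range k, ∑ l ∈ range k,
      if i < j ∧ j < l ∧ f i < f j ∧ f j < f l then 1 else 0 :=
    sum3_congr fun i hi j hj l hl => by
      rw [H1 i hi, H1 j hj, H1 l hl]
  have t2 : (∑ i ∈ range k, ∑ j ∈ range k,
      if i < j ∧ j < k ∧ h i < h j ∧ h j < h k then 1 else 0)
      = ∑ i ∈ range k, ∑ j ∈ range k, if i < j ∧ f i < f j then 1 else 0 :=
    sum2_congr fun i hi j hj => by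
      rw [H1 i hi, H1 j hj, H2]
      have := H3 j hj
      exact if_congr (by omega) rfl rfl
  have t3 : (∑ i ∈ range k, ∑ l ∈ range k,
      if i < k ∧ k < l ∧ h i < h k ∧ h k < h l then 1 else 0) = 0 :=
    sum2_zero fun i hi l hl => if_neg (by omega)
  have t4 : (∑ i ∈ range k, if i < k ∧ k < k ∧ h i < h k ∧ h k < h k then 1 else 0) = 0 :=
    sum_eq_zero fun i _ => if_neg (by omega)
  have t5 : (∑ j ∈ range k, ∑ l ∈ range k,
      if k < j ∧ j < l ∧ h k < h j ∧ h j < h l then 1 else 0) = 0 :=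
    sum2_zero fun j hj l hl => if_neg (by omega)
  have t6 : (∑ j ∈ range k, if k < j ∧ j < k ∧ h k < h j ∧ h j < h k then 1 else 0) = 0 :=
    sum_eq_zero fun j hj => if_neg (by omega)
  have t7 : (∑ l ∈ range k, if k < k ∧ k < l ∧ h k < h k ∧ h k < h l then 1 else 0) = 0 :=
    sum_eq_zero fun l _ => if_neg (by omega)
  have t8 : (if k < k ∧ k < k ∧ h k < h k ∧ h k < h k then 1 else 0) = 0 :=
    if_neg (by omega)
  rw [t1, t2, t3, t4, t5, t6, t7, t8]
  ring

include H1 H2 H3 in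
lemma ext12 : cnt12 h (k + 1) = cnt12 f k + k := by
  rw [cnt12_sum, cnt12_sum, pair_split_succ]
  have t1 : (∑ i ∈ range k, ∑ j ∈ range k, if i < j ∧ h i < h j then 1 else 0)
      = ∑ i ∈ range k, ∑ j ∈ range k, if i < j ∧ f i < f j then 1 else 0 :=
    sum2_congr fun i hi j hj => by
      rw [H1 i hi, H1 j hj]
  have t2 : (∑ i ∈ range k, if i < k ∧ h i < h k then 1 else 0) = k := by
    have e : ∀ i ∈ range k, (if i < k ∧ h i < h k then (1:ℕ) else 0) = 1 := fun i hi => by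
      rw [H1 i (mem_range.1 hi), H2]
      exact if_pos ⟨mem_range.1 hi, H3 i (mem_range.1 hi)⟩
    rw [Finset.sum_congr rfl e, Finset.sum_const, card_range, smul_eq_mul, mul_one]
  have t3 : (∑ j ∈ range k, if k < j ∧ h k < h j then 1 else 0) = 0 :=
    sum_eq_zero fun j hj => if_neg (by have := mem_range.1 hj; omega)
  have t4 : (if k < k ∧ h k < h k then 1 else 0) = 0 := if_neg (by omega)
  rw [t1, t2, t3, t4]
  omega

end ExtMax

end NPat

namespace NPat

def extPerm {k : ℕ} (σ : Perm (Fin k)) : Perm (Fin (k + 1)) :=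
  finSumFinEquiv.permCongr (Equiv.sumCongr σ (Equiv.refl (Fin 1)))

lemma extPerm_lt {k : ℕ} (σ : Perm (Fin k)) (i : Fin (k + 1)) (h : i.val < k) :
    (extPerm σ i).val = (σ ⟨i.val, h⟩).val := by
  have hi : i = finSumFinEquiv (Sum.inl ⟨i.val, h⟩) := by
    apply Fin.ext; simp
  conv_lhs => rw [hi, extPerm, Equiv.permCongr_apply, Equiv.symm_apply_apply]
  simp

lemma extPerm_last {k : ℕ} (σ : Perm (Fin k)) (i : Fin (k + 1)) (h : i.val = k) :
    (extPerm σ i).val = k := by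
  have hi : i = finSumFinEquiv (Sum.inr (0 : Fin 1)) := by
    apply Fin.ext; simp [h]
  conv_lhs => rw [hi, extPerm, Equiv.permCongr_apply, Equiv.symm_apply_apply]
  simp

def gluePerm {k m : ℕ} (σ : Perm (Fin k)) (τ : Perm (Fin m)) : Perm (Fin (k + 1 + m)) :=
  (finSumFinEquiv.symm.trans
    (((extPerm σ).sumCongr τ).trans ((Equiv.sumComm (Fin (k + 1)) (Fin m)).trans
      (finSumFinEquiv.trans (finCongr (Nat.add_comm m (k + 1))))))) 

lemma gluePerm_lt {k m : ℕ} (σ : Perm (Fin k)) (τ : Perm (Fin m)) (i : Fin (k + 1 + m))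
    (h : i.val < k + 1) :
    (gluePerm σ τ i).val = m + (extPerm σ ⟨i.val, h⟩).val := by
  have hi : i = finSumFinEquiv (Sum.inl (⟨i.val, h⟩ : Fin (k + 1))) := by
    apply Fin.ext; simp
  conv_lhs => rw [hi]
  simp only [gluePerm, Equiv.trans_apply, Equiv.symm_apply_apply, Equiv.sumCongr_apply,
    Sum.map_inl, Equiv.sumComm_apply, Sum.swap_inl, finSumFinEquiv_apply_right,
    finCongr_apply, Fin.coe_cast, Fin.coe_natAdd]

lemma gluePerm_ge {k m : ℕ} (σ : Perm (Fin k)) (τ : Perm (Fin m)) (i : Fin (k + 1 + m))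
    (h : k + 1 ≤ i.val) :
    (gluePerm σ τ i).val = (τ ⟨i.val - (k + 1), by have := i.isLt; omega⟩).val := by
  have hlt : i.val - (k + 1) < m := by have := i.isLt; omega
  have hi : i = finSumFinEquiv (Sum.inr (⟨i.val - (k + 1), hlt⟩ : Fin m)) := by
    apply Fin.ext; simp; omega
  conv_lhs => rw [hi]
  simp only [gluePerm, Equiv.trans_apply, Equiv.symm_apply_apply, Equiv.sumCongr_apply,
    Sum.map_inr, Equiv.sumComm_apply, Sum.swap_inr, finSumFinEquiv_apply_left,
    finCongr_apply, Fin.coe_cast, Fin.coe_castAdd]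

section GlueCounts

variable {k m : ℕ} (σ : Perm (Fin k)) (τ : Perm (Fin m))

lemma glue_H1 : ∀ i < k + 1, fval (gluePerm σ τ) i = m + fval (extPerm σ) i := by
  intro i hi
  have hi' : i < k + 1 + m := by omega
  rw [fval, dif_pos hi', fval, dif_pos hi]
  exact gluePerm_lt σ τ ⟨i, hi'⟩ hi

lemma glue_H2 : ∀ j < m, fval (gluePerm σ τ) (k + 1 + j) = fval τ j := by
  intro j hj
  have hj' : k + 1 + j < k + 1 + m := by omega
  rw [fval, dif_pos hj', fval, dif_pos hj]
  rw [gluePerm_ge σ τ ⟨k + 1 + j, hj'⟩ (by simp)]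
  congr 1
  apply Fin.ext
  simp

lemma glue_H3 : ∀ j < m, fval τ j < m := by
  intro j hj
  rw [fval, dif_pos hj]
  exact (τ ⟨j, hj⟩).isLt

lemma ext_H1 : ∀ i < k, fval (extPerm σ) i = fval σ i := by
  intro i hi
  rw [fval, dif_pos (by omega : i < k + 1), fval, dif_pos hi]
  exact extPerm_lt σ ⟨i, by omega⟩ hi

lemma ext_H2 : fval (extPerm σ) k = k := by
  rw [fval, dif_pos (by omega : k < k + 1)]
  exact extPerm_last σ ⟨k, by omega⟩ rfl

lemma ext_H3 : ∀ i < k, fval σ i < k := by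
  intro i hi
  rw [fval, dif_pos hi]
  exact (σ ⟨i, hi⟩).isLt

lemma count132_glue : count132 (gluePerm σ τ) = count132 σ + count132 τ := by
  rw [count132_eq, count132_eq, count132_eq]
  rw [block132 (glue_H1 σ τ) (glue_H2 σ τ) (glue_H3 τ),
    ext132 (ext_H1 σ) (ext_H2 σ) (ext_H3 σ)]

lemma count123_glue :
    count123 (gluePerm σ τ) = count123 σ + count123 τ + count12 σ := by
  rw [count123_eq, count123_eq, count123_eq, count12_eq]
  rw [block123 (glue_H1 σ τ) (glue_H2 σ τ) (glue_H3 τ),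
    ext123 (ext_H1 σ) (ext_H2 σ) (ext_H3 σ)]
  omega

lemma count12_glue : count12 (gluePerm σ τ) = count12 σ + count12 τ + k := by
  rw [count12_eq, count12_eq, count12_eq]
  rw [block12 (glue_H1 σ τ) (glue_H2 σ τ) (glue_H3 τ),
    ext12 (ext_H1 σ) (ext_H2 σ) (ext_H3 σ)]
  omega

end GlueCounts

end NPat

namespace NPat

lemma permCongr_finCongr_eq {a b : ℕ} (h : a = b) (π : Perm (Fin a)) (x : Fin b)
    (hx : x.val < a) :
    ((finCongr h).permCongr π x).val = (π ⟨x.val, hx⟩).val := by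
  subst h
  simp [Equiv.permCongr_apply]

lemma count132_cast {a b : ℕ} (h : a = b) (π : Perm (Fin a)) :
    count132 ((finCongr h).permCongr π) = count132 π := by
  subst h
  have : (finCongr rfl).permCongr π = π := Equiv.ext fun x => by simp
  rw [this]

lemma count123_cast {a b : ℕ} (h : a = b) (π : Perm (Fin a)) :
    count123 ((finCongr h).permCongr π) = count123 π := by
  subst h
  have : (finCongr rfl).permCongr π = π := Equiv.ext fun x => by simp
  rw [this]

lemma count12_cast {a b : ℕ} (h : a = b) (π : Perm (Fin a)) :
    count12 ((finCongr h).permCongr π) = count12 π := by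
  subst h
  have : (finCongr rfl).permCongr π = π := Equiv.ext fun x => by simp
  rw [this]

set_option maxHeartbeats 1000000 in
theorem master (n : ℕ) (Q : ℕ → ℕ → Prop) [∀ x y, Decidable (Q x y)] :
    (univ.filter fun π : Perm (Fin (n + 1)) =>
        count132 π = 0 ∧ Q (count123 π) (count12 π)).card
    = ∑ k ∈ range (n + 1),
        (univ.filter fun p : Perm (Fin k) × Perm (Fin (n - k)) =>
          count132 p.1 = 0 ∧ count132 p.2 = 0 ∧
          Q (count123 p.1 + count123 p.2 + count12 p.1)
            (count12 p.1 + count12 p.2 + k)).card := by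
  rw [Finset.card_eq_sum_card_fiberwise
    (f := fun π : Perm (Fin (n + 1)) => (π.symm (Fin.last n)).val)
    (t := range (n + 1)) (fun π _ => mem_range.2 (π.symm (Fin.last n)).isLt)]
  apply sum_congr rfl
  intro k hk
  have hkn : k ≤ n := by have := mem_range.1 hk; omega
  have hnm : k + 1 + (n - k) = n + 1 := by omega
  set m := n - k with hm
  set G : Perm (Fin k) × Perm (Fin m) → Perm (Fin (n + 1)) :=
    fun p => (finCongr hnm).permCongr (gluePerm p.1 p.2) with hG
  have hGval : ∀ (p : Perm (Fin k) × Perm (Fin m)) (x : Fin (n + 1)),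
      (G p x).val = (gluePerm p.1 p.2 ⟨x.val, by omega⟩).val := by
    intro p x
    rw [hG]
    exact permCongr_finCongr_eq hnm _ x (by omega)
  have hGcounts : ∀ p : Perm (Fin k) × Perm (Fin m),
      count132 (G p) = count132 p.1 + count132 p.2 ∧
      count123 (G p) = count123 p.1 + count123 p.2 + count12 p.1 ∧
      count12 (G p) = count12 p.1 + count12 p.2 + k := by
    intro p
    rw [hG]
    refine ⟨?_, ?_, ?_⟩
    · rw [count132_cast, count132_glue]
    · rw [count123_cast, count123_glue]
    · rw [count12_cast, count12_glue]
  have hGlast : ∀ p : Perm (Fin k) × Perm (Fin m),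
      ((G p).symm (Fin.last n)).val = k := by
    intro p
    have h1 : G p ⟨k, by omega⟩ = Fin.last n := by
      apply Fin.ext
      rw [hGval]
      rw [gluePerm_lt p.1 p.2 _ (by simp)]
      rw [extPerm_last p.1 _ rfl]
      simp [Fin.last]
      omega
    rw [← h1, Equiv.symm_apply_apply]
  symm
  apply Finset.card_bij (fun p _ => G p)
  · rintro ⟨σ, τ⟩ hp
    simp only [mem_filter, mem_univ, true_and] at hp ⊢
    obtain ⟨h1, h2, h3⟩ := hp
    obtain ⟨c1, c2, c3⟩ := hGcounts (σ, τ)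
    exact ⟨⟨by rw [c1, h1, h2], by rwa [c2, c3]⟩, hGlast (σ, τ)⟩
  · rintro ⟨σ, τ⟩ _ ⟨σ', τ'⟩ _ hEq
    have hg : gluePerm σ τ = gluePerm σ' τ' := by
      have h2 := congrArg (finCongr hnm).permCongr.symm hEq
      simpa [hG, Equiv.symm_apply_apply] using h2
    have hσ : σ = σ' := by
      apply Equiv.ext
      intro x
      apply Fin.ext
      have hx : (x.val : ℕ) < k + 1 := by omega
      have h1 := congrArg (fun π : Perm (Fin (k + 1 + m)) => (π ⟨x.val, by omega⟩).val) hg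
      rw [gluePerm_lt σ τ _ hx, gluePerm_lt σ' τ' _ hx,
        extPerm_lt σ _ x.isLt, extPerm_lt σ' _ x.isLt] at h1
      simpa using h1
    have hτ : τ = τ' := by
      apply Equiv.ext
      intro x
      apply Fin.ext
      have hx : k + 1 ≤ k + 1 + x.val := by omega
      have h1 := congrArg
        (fun π : Perm (Fin (k + 1 + m)) => (π ⟨k + 1 + x.val, by omega⟩).val) hg
      rw [gluePerm_ge σ τ _ hx, gluePerm_ge σ' τ' _ hx] at h1
      have he : k + 1 + x.val - (k + 1) = x.val := by omega
      simp only [he] at h1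
      simpa using h1
    rw [hσ, hτ]
  · intro π hπ
    simp only [mem_filter, mem_univ, true_and] at hπ
    obtain ⟨⟨h132, hQ⟩, hfib⟩ := hπ
    have hπk : π ⟨k, by omega⟩ = Fin.last n := by
      have h0 : π.symm (Fin.last n) = ⟨k, by omega⟩ := Fin.ext hfib
      rw [← h0, Equiv.apply_symm_apply]
    have hlastval : ∀ j : Fin (n + 1), j.val ≠ k → (π j).val < n := by
      intro j hj
      have hne : π j ≠ Fin.last n := by
        intro hcon
        apply hj
        have : j = ⟨k, by omega⟩ := π.injective (by rw [hπk, hcon])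
        rw [this]
      have h2 : (π j).val ≤ n := by have := (π j).isLt; omega
      rcases Nat.lt_or_ge (π j).val n with h | h
      · exact h
      · exact absurd (Fin.ext (by simp [Fin.last]; omega) : π j = Fin.last n) hne
    have F1 : ∀ i j : Fin (n + 1), i.val < k → k < j.val → (π j).val < (π i).val := by
      intro i j hi hj
      by_contra hcon
      push_neg at hcon
      have hij : π i ≠ π j := fun h => by
        have := π.injective h
        rw [this] at hi
        omega
      have hlt : (π i).val < (π j).val :=
        lt_of_le_of_ne hcon (fun h => hij (Fin.ext h))
      have hjlast : (π j).val < n := hlastval j (by omega)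
      have hmem : (i, (⟨k, by omega⟩ : Fin (n + 1)), j) ∈
          (univ.filter (fun p : Fin (n + 1) × Fin (n + 1) × Fin (n + 1) =>
            p.1 < p.2.1 ∧ p.2.1 < p.2.2 ∧ π p.1 < π p.2.2 ∧ π p.2.2 < π p.2.1)) := by
        simp only [mem_filter, mem_univ, true_and]
        refine ⟨by rw [Fin.lt_def]; exact hi, by rw [Fin.lt_def]; exact hj, ?_, ?_⟩
        · rw [Fin.lt_def]; exact hlt
        · rw [hπk, Fin.lt_def]; simp [Fin.last]; omega
      rw [count132, Finset.card_eq_zero] at h132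
      rw [h132] at hmem
      exact absurd hmem (notMem_empty _)
    have F2 : ∀ j : Fin (n + 1), k < j.val → (π j).val < m := by
      intro j hj
      have hsub : (Iic (⟨k, by omega⟩ : Fin (n + 1))).image π ⊆ Ioi (π j) := by
        intro y hy
        rw [mem_image] at hy
        obtain ⟨x, hx, rfl⟩ := hy
        rw [mem_Iic] at hx
        rw [mem_Ioi, Fin.lt_def]
        have hxk : x.val ≤ k := hx
        by_cases hxe : x.val = k
        · have : x = ⟨k, by omega⟩ := Fin.ext hxe
          rw [this, hπk]
          have := hlastval j (by omega)
          simp [Fin.last]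
          omega
        · exact F1 x j (by omega) hj
      have hcard := Finset.card_le_card hsub
      rw [Finset.card_image_of_injective _ π.injective, Fin.card_Iic, Fin.card_Ioi] at hcard
      simp at hcard
      omega
    have F3 : ∀ i : Fin (n + 1), i.val < k → m ≤ (π i).val := by
      intro i hi
      have hsub : (Ioi (⟨k, by omega⟩ : Fin (n + 1))).image π ⊆ Iio (π i) := by
        intro y hy
        rw [mem_image] at hy
        obtain ⟨x, hx, rfl⟩ := hy
        rw [mem_Ioi] at hx
        rw [mem_Iio, Fin.lt_def]
        exact F1 i x hi hx
      have hcard := Finset.card_le_card hsub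
      rw [Finset.card_image_of_injective _ π.injective, Fin.card_Ioi, Fin.card_Iio] at hcard
      simp at hcard
      omega
    have hvlt : ∀ i : Fin (n + 1), i.val < k → (π i).val - m < k := by
      intro i hi
      have := hlastval i (by omega)
      omega
    set σf : Fin k → Fin k := fun x => ⟨(π ⟨x.val, by omega⟩).val - m,
      hvlt ⟨x.val, by omega⟩ x.isLt⟩ with hσf
    have hσinj : Function.Injective σf := by
      intro x y hxy
      rw [hσf] at hxy
      simp only [Fin.mk.injEq] at hxy
      have h3x := F3 ⟨x.val, by omega⟩ x.isLt
      have h3y := F3 ⟨y.val, by omega⟩ y.isLt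
      have : (π ⟨x.val, by omega⟩).val = (π ⟨y.val, by omega⟩).val := by omega
      have := π.injective (Fin.ext this)
      simp only [Fin.mk.injEq] at this
      exact Fin.ext this
    set σ : Perm (Fin k) := Equiv.ofBijective σf (Finite.injective_iff_bijective.mp hσinj)
      with hσdef
    set τf : Fin m → Fin m := fun j => ⟨(π ⟨k + 1 + j.val, by omega⟩).val,
      F2 ⟨k + 1 + j.val, by omega⟩ (by show k < k + 1 + j.val; omega)⟩ with hτf
    have hτinj : Function.Injective τf := by
      intro x y hxy
      rw [hτf] at hxy
      simp only [Fin.mk.injEq] at hxy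
      have := π.injective (Fin.ext hxy)
      simp only [Fin.mk.injEq] at this
      exact Fin.ext (by omega)
    set τ : Perm (Fin m) := Equiv.ofBijective τf (Finite.injective_iff_bijective.mp hτinj)
      with hτdef
    have hσval : ∀ (j : ℕ) (hj : j < k), (σ ⟨j, hj⟩).val = (π ⟨j, by omega⟩).val - m :=
      fun j hj => rfl
    have hτval : ∀ (j : ℕ) (hj : j < m), (τ ⟨j, hj⟩).val = (π ⟨k + 1 + j, by omega⟩).val :=
      fun j hj => rfl
    have hglue : G (σ, τ) = π := by
      apply Equiv.ext
      intro x
      apply Fin.ext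
      rw [hGval]
      rcases Nat.lt_trichotomy x.val k with h | h | h
      · rw [gluePerm_lt _ _ _ (by simp; omega), extPerm_lt _ _ (by simpa using h)]
        simp only [hσval]
        have h3 := F3 x h
        have hxe : (⟨x.val, by omega⟩ : Fin (n + 1)) = x := Fin.ext rfl
        rw [hxe]
        omega
      · rw [gluePerm_lt _ _ _ (by simp; omega), extPerm_last _ _ (by simpa using h)]
        have hxe : x = ⟨k, by omega⟩ := Fin.ext h
        rw [hxe, hπk]
        simp [Fin.last]
        omega
      · rw [gluePerm_ge _ _ _ (by simpa using h)]
        simp only [hτval]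
        have hxe : (⟨k + 1 + (x.val - (k + 1)), by omega⟩ : Fin (n + 1)) = x :=
          Fin.ext (by simp; omega)
        rw [hxe]
    refine ⟨(σ, τ), ?_, hglue⟩
    simp only [mem_filter, mem_univ, true_and]
    obtain ⟨c1, c2, c3⟩ := hGcounts (σ, τ)
    rw [hglue] at c1 c2 c3
    dsimp only at c1 c2 c3
    refine ⟨by omega, by omega, ?_⟩
    rw [← c2, ← c3]
    exact hQ

end NPat

namespace NPat

lemma strictMono_le_apply {n : ℕ} {f : Fin n → Fin n} (hf : StrictMono f) (x : Fin n) :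
    x ≤ f x := by
  have key : ∀ v : ℕ, ∀ x : Fin n, x.val = v → x ≤ f x := by
    intro v
    induction v using Nat.strong_induction_on with
    | _ v ih =>
      intro x hx
      by_contra hc
      push_neg at hc
      have h1 := ih (f x).val (by rw [← hx]; exact Fin.lt_def.mp hc) (f x) rfl
      have h2 := hf hc
      exact absurd h1 (not_le.mpr h2)
  exact key x.val x rfl

lemma count123_of_12_zero {n : ℕ} (π : Perm (Fin n)) (h : count12 π = 0) :
    count123 π = 0 := by
  rw [count12, Finset.card_eq_zero, Finset.filter_eq_empty_iff] at h
  rw [count123, Finset.card_eq_zero, Finset.filter_eq_empty_iff]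
  rintro ⟨i, j, l⟩ _ ⟨h1, h2, h3, h4⟩
  exact h (mem_univ (i, j)) ⟨h1, h3⟩

lemma count132_of_12_zero {n : ℕ} (π : Perm (Fin n)) (h : count12 π = 0) :
    count132 π = 0 := by
  rw [count12, Finset.card_eq_zero, Finset.filter_eq_empty_iff] at h
  rw [count132, Finset.card_eq_zero, Finset.filter_eq_empty_iff]
  rintro ⟨i, j, l⟩ _ ⟨h1, h2, h3, h4⟩
  exact h (mem_univ (i, l)) ⟨h1.trans h2, h3⟩

lemma count12_ge_three {n : ℕ} (π : Perm (Fin n)) (h : count123 π ≠ 0) :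
    3 ≤ count12 π := by
  rw [count123] at h
  obtain ⟨⟨i, j, l⟩, hm⟩ := Finset.card_pos.mp (Nat.pos_of_ne_zero h)
  simp only [mem_filter, mem_univ, true_and] at hm
  obtain ⟨h1, h2, h3, h4⟩ := hm
  have hsub : ({(i, j), (j, l), (i, l)} : Finset (Fin n × Fin n)) ⊆
      univ.filter (fun p => p.1 < p.2 ∧ π p.1 < π p.2) := by
    intro x hx
    simp only [mem_insert, mem_singleton] at hx
    rcases hx with rfl | rfl | rfl <;> simp only [mem_filter, mem_univ, true_and]
    · exact ⟨h1, h3⟩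
    · exact ⟨h2, h4⟩
    · exact ⟨h1.trans h2, h3.trans h4⟩
  have hcard : ({(i, j), (j, l), (i, l)} : Finset (Fin n × Fin n)).card = 3 := by
    rw [card_insert_of_notMem, card_insert_of_notMem, card_singleton]
    · intro hc
      simp only [mem_singleton, Prod.mk.injEq] at hc
      exact h1.ne' hc.1
    · intro hc
      simp only [mem_insert, mem_singleton, Prod.mk.injEq] at hc
      rcases hc with ⟨he1, he2⟩ | ⟨he1, he2⟩
      · exact h1.ne he1
      · exact h2.ne he2
  calc 3 = ({(i, j), (j, l), (i, l)} : Finset (Fin n × Fin n)).card := hcard.symm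
    _ ≤ _ := Finset.card_le_card hsub

lemma decr_card {n : ℕ} :
    (univ.filter fun σ : Perm (Fin n) => count12 σ = 0).card = 1 := by
  rw [Finset.card_eq_one]
  refine ⟨Fin.revPerm, ?_⟩
  rw [Finset.eq_singleton_iff_unique_mem]
  constructor
  · simp only [mem_filter, mem_univ, true_and]
    rw [count12, Finset.card_eq_zero, Finset.filter_eq_empty_iff]
    rintro ⟨i, j⟩ _ ⟨h1, h2⟩
    simp only [Fin.revPerm_apply] at h2
    exact absurd (Fin.rev_lt_rev.mp h2) (asymm h1)
  · intro σ hσ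
    simp only [mem_filter, mem_univ, true_and] at hσ
    rw [count12, Finset.card_eq_zero, Finset.filter_eq_empty_iff] at hσ
    have hanti : ∀ i j : Fin n, i < j → σ j < σ i := by
      intro i j hij
      have hne := hσ (mem_univ (i, j))
      simp only [not_and] at hne
      rcases lt_trichotomy (σ i) (σ j) with h | h | h
      · exact absurd h (hne hij)
      · exact absurd (σ.injective h) hij.ne
      · exact h
    have hgmono : StrictMono (fun x : Fin n => σ x.rev) := by
      intro x y hxy
      exact hanti y.rev x.rev (Fin.rev_lt_rev.mpr hxy)
    have hg'mono : StrictMono (fun x : Fin n => (σ.symm x).rev) := by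
      intro x y hxy
      have hlt : σ.symm y < σ.symm x := by
        rcases lt_trichotomy (σ.symm x) (σ.symm y) with h | h | h
        · exact absurd (by simpa using hanti _ _ h) (asymm hxy)
        · exact absurd (σ.symm.injective h) hxy.ne
        · exact h
      exact Fin.rev_lt_rev.mpr hlt
    have hfix : ∀ x : Fin n, σ x.rev = x := by
      intro x
      have hle2 : x ≤ (fun x : Fin n => σ x.rev) x := strictMono_le_apply hgmono x
      simp only at hle2
      refine le_antisymm ?_ hle2
      have h1 : x ≤ (fun x : Fin n => (σ.symm x).rev) x := strictMono_le_apply hg'mono x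
      simp only at h1
      have h2 := hgmono.monotone h1
      simpa [Fin.rev_rev] using h2
    apply Equiv.ext
    intro y
    have := hfix y.rev
    simp only [Fin.rev_rev] at this
    rw [this, Fin.revPerm_apply]

end NPat

namespace NPat

lemma card_filter_prod_eq {α β : Type*} [Fintype α] [Fintype β]
    (P : α × β → Prop) [DecidablePred P] (p : α → Prop) (q : β → Prop)
    [DecidablePred p] [DecidablePred q] (h : ∀ x, P x ↔ p x.1 ∧ q x.2) :
    (univ.filter P).card = (univ.filter p).card * (univ.filter q).card := by
  have e : univ.filter P = univ.filter (fun x : α × β => p x.1 ∧ q x.2) :=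
    filter_congr fun x _ => by simp [h x]
  rw [e, ← Finset.univ_product_univ, Finset.filter_product, card_product]

def bfun (n : ℕ) : ℕ :=
  (univ.filter fun π : Perm (Fin n) =>
    count132 π = 0 ∧ (count123 π = 0 ∧ count12 π = 1)).card

def cfun (n : ℕ) : ℕ :=
  (univ.filter fun π : Perm (Fin n) => count132 π = 0 ∧ count123 π = 0).card

lemma cfun_rec (n : ℕ) : cfun (n + 1) = ∑ k ∈ range (n + 1), cfun (n - k) := by
  have h := master n (fun x _ => x = 0)
  have e1 : cfun (n + 1) = (univ.filter fun π : Perm (Fin (n + 1)) =>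
      count132 π = 0 ∧ (fun (x _ : ℕ) => x = 0) (count123 π) (count12 π)).card := by
    rw [cfun]
  rw [e1, h]
  apply sum_congr rfl
  intro k _
  have hP : ∀ p : Perm (Fin k) × Perm (Fin (n - k)),
      (count132 p.1 = 0 ∧ count132 p.2 = 0 ∧
        (fun (x _ : ℕ) => x = 0) (count123 p.1 + count123 p.2 + count12 p.1)
          (count12 p.1 + count12 p.2 + k))
      ↔ ((count12 p.1 = 0) ∧ (count132 p.2 = 0 ∧ count123 p.2 = 0)) := by
    rintro ⟨σ, τ⟩
    simp only
    constructor
    · rintro ⟨h1, h2, h3⟩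
      exact ⟨by omega, h2, by omega⟩
    · rintro ⟨h1, h2, h3⟩
      have hx := count123_of_12_zero _ h1
      exact ⟨count132_of_12_zero _ h1, h2, by omega⟩
  rw [card_filter_prod_eq _ (fun σ => count12 σ = 0)
    (fun τ => count132 τ = 0 ∧ count123 τ = 0) hP, decr_card, one_mul, cfun]

lemma bfun_rec (n : ℕ) : bfun (n + 1) = bfun n + (if 0 < n then 1 else 0) := by
  have h := master n (fun x y => x = 0 ∧ y = 1)
  have e1 : bfun (n + 1) = (univ.filter fun π : Perm (Fin (n + 1)) =>
      count132 π = 0 ∧ (fun (x y : ℕ) => x = 0 ∧ y = 1) (count123 π) (count12 π)).card := by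
    rw [bfun]
  rw [e1, h]
  have hg : ∀ k ∈ range (n + 1),
      (univ.filter fun p : Perm (Fin k) × Perm (Fin (n - k)) =>
        count132 p.1 = 0 ∧ count132 p.2 = 0 ∧
        (fun (x y : ℕ) => x = 0 ∧ y = 1) (count123 p.1 + count123 p.2 + count12 p.1)
          (count12 p.1 + count12 p.2 + k)).card
      = (if k = 0 then bfun n else 0) + (if k = 1 then 1 else 0) := by
    intro k _
    match k with
    | 0 =>
      rw [if_pos rfl, if_neg (by omega), add_zero]
      have hP : ∀ p : Perm (Fin 0) × Perm (Fin (n - 0)),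
          (count132 p.1 = 0 ∧ count132 p.2 = 0 ∧
            (fun (x y : ℕ) => x = 0 ∧ y = 1) (count123 p.1 + count123 p.2 + count12 p.1)
              (count12 p.1 + count12 p.2 + 0))
          ↔ ((count12 p.1 = 0) ∧
             (count132 p.2 = 0 ∧ (count123 p.2 = 0 ∧ count12 p.2 = 1))) := by
        rintro ⟨σ, τ⟩
        simp only
        constructor
        · rintro ⟨h1, h2, h3, h4⟩
          exact ⟨by omega, h2, by omega, by omega⟩
        · rintro ⟨h1, h2, h3, h4⟩
          have hx := count123_of_12_zero _ h1
          exact ⟨count132_of_12_zero _ h1, h2, by omega, by omega⟩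
      rw [card_filter_prod_eq _ (fun σ => count12 σ = 0)
        (fun τ => count132 τ = 0 ∧ (count123 τ = 0 ∧ count12 τ = 1)) hP,
        decr_card, one_mul, bfun]
      rfl
    | 1 =>
      rw [if_neg (by omega), if_pos rfl, zero_add]
      have hP : ∀ p : Perm (Fin 1) × Perm (Fin (n - 1)),
          (count132 p.1 = 0 ∧ count132 p.2 = 0 ∧
            (fun (x y : ℕ) => x = 0 ∧ y = 1) (count123 p.1 + count123 p.2 + count12 p.1)
              (count12 p.1 + count12 p.2 + 1))
          ↔ ((count12 p.1 = 0) ∧ (count12 p.2 = 0)) := by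
        rintro ⟨σ, τ⟩
        simp only
        constructor
        · rintro ⟨h1, h2, h3, h4⟩
          exact ⟨by omega, by omega⟩
        · rintro ⟨h1, h2⟩
          have hx1 := count123_of_12_zero _ h1
          have hx2 := count123_of_12_zero _ h2
          have hx3 := count132_of_12_zero _ h2
          exact ⟨count132_of_12_zero _ h1, hx3, by omega, by omega⟩
      rw [card_filter_prod_eq _ (fun σ => count12 σ = 0) (fun τ => count12 τ = 0) hP,
        decr_card, decr_card, one_mul]
    | (k + 2) =>
      rw [if_neg (by omega), if_neg (by omega), add_zero]
      rw [Finset.card_eq_zero, Finset.filter_eq_empty_iff]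
      rintro ⟨σ, τ⟩ _ ⟨h1, h2, h3, h4⟩
      omega
  rw [sum_congr rfl hg, sum_add_distrib]
  rw [Finset.sum_ite_eq' (range (n + 1)) 0 (fun _ => bfun n),
    Finset.sum_ite_eq' (range (n + 1)) 1 (fun _ => 1)]
  simp [mem_range, Nat.lt_succ_iff]

lemma A_rec (n : ℕ) :
    A (n + 1) = ∑ k ∈ range (n + 1), (bfun k * cfun (n - k) + A (n - k)) := by
  have h := master n (fun x _ => x = 1)
  have e1 : A (n + 1) = (univ.filter fun π : Perm (Fin (n + 1)) =>
      count132 π = 0 ∧ (fun (x _ : ℕ) => x = 1) (count123 π) (count12 π)).card := by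
    rw [A]
  rw [e1, h]
  apply sum_congr rfl
  intro k _
  have hP : ∀ p : Perm (Fin k) × Perm (Fin (n - k)),
      (count132 p.1 = 0 ∧ count132 p.2 = 0 ∧
        (fun (x _ : ℕ) => x = 1) (count123 p.1 + count123 p.2 + count12 p.1)
          (count12 p.1 + count12 p.2 + k))
      ↔ (((count132 p.1 = 0 ∧ (count123 p.1 = 0 ∧ count12 p.1 = 1)) ∧
          (count132 p.2 = 0 ∧ count123 p.2 = 0)) ∨
         ((count12 p.1 = 0) ∧ (count132 p.2 = 0 ∧ count123 p.2 = 1))) := by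
    rintro ⟨σ, τ⟩
    simp only
    constructor
    · rintro ⟨h1, h2, h3⟩
      rcases Nat.lt_or_ge (count12 σ) 1 with hc | hc
      · right
        have hc0 : count12 σ = 0 := by omega
        have hx := count123_of_12_zero _ hc0
        exact ⟨hc0, h2, by omega⟩
      · left
        have hc1 : count12 σ = 1 := by omega
        have h123 : count123 σ = 0 := by
          by_contra hne
          have := count12_ge_three σ hne
          omega
        exact ⟨⟨h1, h123, hc1⟩, h2, by omega⟩
    · rintro (⟨⟨h1, h2, h3⟩, h4, h5⟩ | ⟨h1, h2, h3⟩)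
      · exact ⟨h1, h4, by omega⟩
      · have hx := count123_of_12_zero _ h1
        exact ⟨count132_of_12_zero _ h1, h2, by omega⟩
  have e2 := filter_congr (s := (univ : Finset (Perm (Fin k) × Perm (Fin (n - k)))))
    fun x _ => hP x
  rw [e2, filter_or, card_union_of_disjoint]
  · have c1 := card_filter_prod_eq
      (fun p : Perm (Fin k) × Perm (Fin (n - k)) =>
        (count132 p.1 = 0 ∧ (count123 p.1 = 0 ∧ count12 p.1 = 1)) ∧
        (count132 p.2 = 0 ∧ count123 p.2 = 0))
      (fun σ => count132 σ = 0 ∧ (count123 σ = 0 ∧ count12 σ = 1))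
      (fun τ => count132 τ = 0 ∧ count123 τ = 0) (fun x => Iff.rfl)
    have c2 := card_filter_prod_eq
      (fun p : Perm (Fin k) × Perm (Fin (n - k)) =>
        (count12 p.1 = 0) ∧ (count132 p.2 = 0 ∧ count123 p.2 = 1))
      (fun σ => count12 σ = 0)
      (fun τ => count132 τ = 0 ∧ count123 τ = 1) (fun x => Iff.rfl)
    rw [c1, c2, decr_card, one_mul, bfun, cfun, A]
  · rw [Finset.disjoint_left]
    rintro ⟨σ, τ⟩ hm1 hm2
    simp only [mem_filter, mem_univ, true_and] at hm1 hm2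
    have := hm1.1.2.2
    have := hm2.1
    omega

end NPat

namespace NPat

lemma A_zero : A 0 = 0 := by decide
lemma bfun_zero : bfun 0 = 0 := by decide
lemma cfun_zero : cfun 0 = 1 := by decide

lemma cfun_one : cfun 1 = 1 := by
  rw [show (1 : ℕ) = 0 + 1 from rfl, cfun_rec]
  simp [cfun_zero]

lemma bfun_one : bfun 1 = 0 := by
  rw [show (1 : ℕ) = 0 + 1 from rfl, bfun_rec]
  simp [bfun_zero]

lemma cfun_two_mul (m : ℕ) : cfun (m + 2) = 2 * cfun (m + 1) := by
  rw [show m + 2 = (m + 1) + 1 from rfl, cfun_rec (m + 1), Finset.sum_range_succ']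
  have e : ∀ k ∈ range (m + 1), cfun (m + 1 - (k + 1)) = cfun (m - k) := by
    intro k _
    congr 1
    omega
  rw [sum_congr rfl e, ← cfun_rec m]
  simp only [Nat.sub_zero]
  ring

noncomputable def FA : PowerSeries ℚ := PowerSeries.mk fun n => (A n : ℚ)
noncomputable def FB : PowerSeries ℚ := PowerSeries.mk fun n => (bfun n : ℚ)
noncomputable def FC : PowerSeries ℚ := PowerSeries.mk fun n => (cfun n : ℚ)
noncomputable def FE : PowerSeries ℚ := PowerSeries.mk fun _ => (1 : ℚ)

lemma hE : (1 - X) * FE = 1 := by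
  have e : (1 - X) * FE = FE - X * FE := by ring
  rw [e]
  ext n
  rw [map_sub]
  cases n with
  | zero => simp [FE, coeff_one, coeff_zero_eq_constantCoeff_apply, map_mul, constantCoeff_X]
  | succ n =>
    repeat rw [coeff_succ_X_mul]
    simp [FE, coeff_one]

lemma hC : (1 - 2 * X) * FC = 1 - X := by
  have e : (1 - 2 * X) * FC = FC - X * FC - X * FC := by ring
  rw [e]
  ext n
  rw [map_sub, map_sub, map_sub]
  match n with
  | 0 =>
    simp [FC, cfun_zero, coeff_one, coeff_zero_eq_constantCoeff_apply, map_mul,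
      constantCoeff_X]
  | 1 =>
    repeat rw [coeff_succ_X_mul]
    simp [FC, cfun_zero, cfun_one, coeff_one, coeff_X]
  | (n + 2) =>
    repeat rw [coeff_succ_X_mul]
    simp only [FC, coeff_mk, coeff_one, coeff_X, if_neg (by omega : ¬ n + 2 = 0),
      if_neg (by omega : ¬ n + 2 = 1)]
    rw [cfun_two_mul n]
    push_cast
    ring

lemma hB : (1 - X) ^ 2 * FB = X ^ 2 := by
  have e : (1 - X) ^ 2 * FB = FB + X * (X * FB) - X * FB - X * FB := by ring
  rw [e]
  ext n
  rw [map_sub, map_sub, map_add]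
  match n with
  | 0 =>
    simp [FB, bfun_zero, coeff_X_pow, coeff_zero_eq_constantCoeff_apply, map_mul,
      constantCoeff_X]
  | 1 =>
    repeat rw [coeff_succ_X_mul]
    simp [FB, bfun_zero, bfun_one, coeff_X_pow, coeff_zero_eq_constantCoeff_apply,
      map_mul, constantCoeff_X]
  | (n + 2) =>
    repeat rw [coeff_succ_X_mul]
    simp only [FB, coeff_mk, coeff_X_pow]
    match n with
    | 0 =>
      have r1 : bfun 2 = 1 := by rw [show (2 : ℕ) = 1 + 1 from rfl, bfun_rec]; simp [bfun_one]
      rw [if_pos rfl, r1, bfun_zero, bfun_one]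
      push_cast
      ring
    | (m + 1) =>
      rw [if_neg (by omega)]
      have r1 : bfun (m + 3) = bfun (m + 2) + 1 := by rw [bfun_rec]; simp
      have r2 : bfun (m + 2) = bfun (m + 1) + 1 := by rw [bfun_rec]; simp
      rw [show m + 1 + 2 = m + 3 from rfl, r1, r2]
      push_cast
      ring

lemma hA : FA = X * (FB * FC) + X * (FE * FA) := by
  ext n
  rw [map_add]
  match n with
  | 0 =>
    simp [FA, A_zero, coeff_zero_eq_constantCoeff_apply, map_mul, map_add, constantCoeff_X]
  | (n + 1) =>
    rw [coeff_succ_X_mul, coeff_succ_X_mul, coeff_mul, coeff_mul,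
      Finset.Nat.sum_antidiagonal_eq_sum_range_succ_mk,
      Finset.Nat.sum_antidiagonal_eq_sum_range_succ_mk]
    simp only [FA, FB, FC, FE, coeff_mk, one_mul]
    rw [← Finset.sum_add_distrib, A_rec n]
    push_cast
    rfl

theorem genfun_main :
    (1 - 2 * PowerSeries.X) ^ 2 * PowerSeries.mk (fun n => (A n : ℚ))
      = PowerSeries.X ^ 3 := by
  have hFA : PowerSeries.mk (fun n => (A n : ℚ)) = FA := rfl
  rw [hFA]
  have key : (1 - 2 * X) * FA = X * (1 - X) * (FB * FC) := by
    have h2 : (1 - X) * FA = (1 - X) * (X * (FB * FC)) + X * (((1 - X) * FE) * FA) := by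
      conv_lhs => rw [hA]
      ring
    rw [hE] at h2
    linear_combination h2
  have hcancel : (1 - X) ^ 2 ≠ (0 : PowerSeries ℚ) := by
    apply pow_ne_zero
    intro hcon
    have := congrArg constantCoeff hcon
    simp at this
  apply mul_right_cancel₀ hcancel
  calc (1 - 2 * X) ^ 2 * FA * (1 - X) ^ 2
      = X * ((1 - X) ^ 2 * FB) * ((1 - 2 * X) * FC) * (1 - X) := by
        have e1 : (1 - 2 * X) ^ 2 * FA * (1 - X) ^ 2
            = ((1 - 2 * X) * FA) * ((1 - 2 * X) * (1 - X) ^ 2) := by ring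
        rw [e1, key]
        ring
    _ = X ^ 3 * (1 - X) ^ 2 := by rw [hB, hC]; ring

end NPat

theorem genfun_no132_1 :
    (1 - 2 * PowerSeries.X) ^ 2 * PowerSeries.mk (fun n => (A n : ℚ)) = PowerSeries.X ^ 3 :=
  NPat.genfun_main
end

section
/- Let B₁(n) denote the number of permutations of length n containing exactly one 132 pattern and exactly one 123 pattern. Then in ℚ[[z]], the generating function G₁(z) = ∑_{n≥0} B₁(n)·zⁿ satisfies (1 - 2z)³·G₁(z) = 2z⁵. -/
/-- The number of permutations of length n with exactly one 132 pattern and exactly 1 123 patterns. -/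
def B (n : ℕ) : ℕ :=
  (Finset.univ.filter (fun π : Equiv.Perm (Fin n) =>
    count132 π = 1 ∧ count123 π = 1)).card

open Finset

namespace Equiv.Perm

variable {n : ℕ}

/-- In one-line notation: `v` followed by the entries of `σ`, renumbered by `v.succAbove`. -/
def finCons (v : Fin (n + 1)) (σ : Perm (Fin n)) : Perm (Fin (n + 1)) :=
  (finSuccEquiv n).trans (σ.optionCongr.trans (finSuccEquiv' v).symm)

@[simp] lemma finCons_zero (v : Fin (n + 1)) (σ : Perm (Fin n)) : finCons v σ 0 = v := by
  simp [finCons]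

@[simp] lemma finCons_succ (v : Fin (n + 1)) (σ : Perm (Fin n)) (i : Fin n) :
    finCons v σ i.succ = v.succAbove (σ i) := by
  simp [finCons]

lemma finCons_inv_self (v : Fin (n + 1)) (σ : Perm (Fin n)) : (finCons v σ)⁻¹ v = 0 := by
  rw [inv_def, symm_apply_eq, finCons_zero]

lemma finCons_inv_succAbove (v : Fin (n + 1)) (σ : Perm (Fin n)) (x : Fin n) :
    (finCons v σ)⁻¹ (v.succAbove x) = (σ⁻¹ x).succ := by
  rw [inv_def, symm_apply_eq, finCons_succ]
  simp

lemma finCons_bijective :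
    Function.Bijective (fun p : Fin (n + 1) × Perm (Fin n) => finCons p.1 p.2) := by
  refine (Fintype.bijective_iff_injective_and_card _).2
    ⟨?_, by simp [Fintype.card_perm, Nat.factorial_succ]⟩
  rintro ⟨v, σ⟩ ⟨w, τ⟩ h
  obtain rfl : v = w := by simpa using congr($h 0)
  refine Prod.ext rfl (Equiv.ext fun i => ?_)
  simpa using congr($h i.succ)

lemma card_filter_eq_sum_finCons (P : Perm (Fin (n + 1)) → Prop) [DecidablePred P] :
    #{π | P π} = ∑ v, #{σ : Perm (Fin n) | P (finCons v σ)} := by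
  simp only [card_filter]
  rw [← (Equiv.ofBijective _ finCons_bijective).sum_comp, Fintype.sum_prod_type]
  rfl

lemma card_triples_finCons (R : Fin (n + 1) → Fin (n + 1) → Fin (n + 1) → Prop)
    [∀ a b c, Decidable (R a b c)] (v : Fin (n + 1)) (σ : Perm (Fin n)) :
    #{p : Fin (n + 1) × Fin (n + 1) × Fin (n + 1) | p.1 < p.2.1 ∧ p.2.1 < p.2.2 ∧
        R (finCons v σ p.1) (finCons v σ p.2.1) (finCons v σ p.2.2)} =
      #{q : Fin n × Fin n | q.1 < q.2 ∧ R v (v.succAbove (σ q.1)) (v.succAbove (σ q.2))} +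
      #{p : Fin n × Fin n × Fin n | p.1 < p.2.1 ∧ p.2.1 < p.2.2 ∧
        R (v.succAbove (σ p.1)) (v.succAbove (σ p.2.1)) (v.succAbove (σ p.2.2))} := by
  simp only [card_filter, Fintype.sum_prod_type, Fin.sum_univ_succ, Fin.succ_lt_succ_iff,
    Fin.succ_pos, Fin.not_lt_zero, finCons_zero, finCons_succ, false_and, if_false,
    sum_const_zero, zero_add, true_and, and_false]

lemma lt_succAbove_iff_val_le (v : Fin (n + 1)) (x : Fin n) :
    v < v.succAbove x ↔ (v : ℕ) ≤ x := by
  rw [Fin.lt_succAbove_iff_le_castSucc, Fin.le_def, Fin.val_castSucc]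

def headCount132 (v : Fin (n + 1)) (σ : Perm (Fin n)) : ℕ :=
  #{q : Fin n × Fin n | q.1 < q.2 ∧ (v : ℕ) ≤ σ q.2 ∧ σ q.2 < σ q.1}

def headCount123 (v : Fin (n + 1)) (σ : Perm (Fin n)) : ℕ :=
  #{q : Fin n × Fin n | q.1 < q.2 ∧ (v : ℕ) ≤ σ q.1 ∧ σ q.1 < σ q.2}

lemma count132_finCons (v : Fin (n + 1)) (σ : Perm (Fin n)) :
    count132 (finCons v σ) = headCount132 v σ + count132 σ := by
  refine (card_triples_finCons (fun a b c => a < c ∧ c < b) v σ).trans ?_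
  simp only [Fin.succAbove_lt_succAbove_iff, lt_succAbove_iff_val_le]
  rfl

lemma count123_finCons (v : Fin (n + 1)) (σ : Perm (Fin n)) :
    count123 (finCons v σ) = headCount123 v σ + count123 σ := by
  refine (card_triples_finCons (fun a b c => a < b ∧ b < c) v σ).trans ?_
  simp only [Fin.succAbove_lt_succAbove_iff, lt_succAbove_iff_val_le]
  rfl

lemma card_filter_le_val_apply (v : ℕ) (σ : Perm (Fin n)) :
    #{i | v ≤ (σ i : ℕ)} = n - v := by
  rw [card_equiv σ (t := {x : Fin n | v ≤ (x : ℕ)}) (by simp)]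
  have h := card_filter_add_card_filter_not (s := (univ : Finset (Fin n))) (fun x => (x : ℕ) < v)
  simp only [card_univ, Fintype.card_fin, Fin.card_filter_val_lt, not_lt] at h
  omega

lemma headCount132_add_headCount123 (v : Fin (n + 1)) (σ : Perm (Fin n)) :
    headCount132 v σ + headCount123 v σ = (n - v).choose 2 := by
  set T : Finset (Fin n) := {i | (v : ℕ) ≤ σ i}
  have hT : #T = n - v := card_filter_le_val_apply v σ
  rw [← hT, ← card_product_filter_lt, headCount132, headCount123, ← card_union_of_disjoint]
  · congr 1
    ext q
    simp only [mem_union, mem_filter, mem_univ, true_and, mem_product, T]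
    have := σ.injective.ne_iff (x := q.1) (y := q.2)
    simp only [Fin.lt_def] at this ⊢
    omega
  · simp only [disjoint_left, mem_filter, mem_univ, true_and]
    rintro q ⟨-, -, h⟩ ⟨-, -, h'⟩
    exact lt_asymm h h'

lemma headCount132_eq_zero_of_le (v : Fin (n + 1)) (σ : Perm (Fin n)) (hv : n ≤ v + 1) :
    headCount132 v σ = 0 := by
  have := headCount132_add_headCount123 v σ
  rw [Nat.choose_eq_zero_of_lt (by omega)] at this
  omega

lemma headCount123_eq_zero_of_le (v : Fin (n + 1)) (σ : Perm (Fin n)) (hv : n ≤ v + 1) :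
    headCount123 v σ = 0 := by
  have := headCount132_add_headCount123 v σ
  rw [Nat.choose_eq_zero_of_lt (by omega)] at this
  omega

lemma three_le_headCount132_add_headCount123 (v : Fin (n + 1)) (σ : Perm (Fin n))
    (hv : v + 3 ≤ n) : 3 ≤ headCount132 v σ + headCount123 v σ := by
  rw [headCount132_add_headCount123]
  exact Nat.choose_le_choose 2 (by omega : 3 ≤ n - v)

def maxBeforeSecondMax (σ : Perm (Fin (n + 2))) : Bool :=
  σ⁻¹ (Fin.last (n + 1)) < σ⁻¹ (Fin.last n).castSucc

lemma maxBeforeSecondMax_finCons_last (σ : Perm (Fin (n + 2))) :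
    maxBeforeSecondMax (finCons (Fin.last (n + 2)) σ) = true := by
  rw [maxBeforeSecondMax, finCons_inv_self, ← Fin.succAbove_last, finCons_inv_succAbove]
  simp [Fin.succ_pos]

lemma maxBeforeSecondMax_finCons_castSucc_last (σ : Perm (Fin (n + 2))) :
    maxBeforeSecondMax (finCons (Fin.last (n + 1)).castSucc σ) = false := by
  have hmax : (Fin.last (n + 1)).castSucc.succAbove (Fin.last (n + 1)) = Fin.last (n + 2) := by
    rw [Fin.succAbove_of_le_castSucc _ _ le_rfl, Fin.succ_last]
  rw [maxBeforeSecondMax, finCons_inv_self, ← hmax, finCons_inv_succAbove]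
  simp

lemma maxBeforeSecondMax_finCons_of_le (v : Fin (n + 3)) (σ : Perm (Fin (n + 2)))
    (hv : (v : ℕ) ≤ n) :
    maxBeforeSecondMax (finCons v σ) = maxBeforeSecondMax σ := by
  have hmax : v.succAbove (Fin.last (n + 1)) = Fin.last (n + 2) := by
    rw [Fin.succAbove_of_le_castSucc _ _ (by simp [Fin.le_def]; omega), Fin.succ_last]
  have hsecond : v.succAbove (Fin.last n).castSucc = (Fin.last (n + 1)).castSucc := by
    rw [Fin.succAbove_of_le_castSucc _ _ (by simp [Fin.le_def]; omega)]
    rfl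
  simp only [maxBeforeSecondMax, ← hmax, ← hsecond, finCons_inv_succAbove, Fin.succ_lt_succ_iff]

lemma headCount132_finCons_castSucc_castSucc_last (σ : Perm (Fin (n + 2))) :
    headCount132 (Fin.last n).castSucc.castSucc σ = (maxBeforeSecondMax σ).toNat := by
  have key : ∀ q : Fin (n + 2) × Fin (n + 2),
      (q.1 < q.2 ∧ n ≤ (σ q.2 : ℕ) ∧ σ q.2 < σ q.1) ↔
        q = (σ⁻¹ (Fin.last (n + 1)), σ⁻¹ (Fin.last n).castSucc) ∧ q.1 < q.2 := by
    rintro ⟨i, j⟩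
    simp only [Prod.mk.injEq, eq_inv_iff_eq, Fin.ext_iff, Fin.lt_def, Fin.val_last,
      Fin.val_castSucc]
    have := (σ i).isLt
    omega
  simp only [headCount132, Fin.val_castSucc, Fin.val_last, key, filter_and, filter_eq',
    mem_univ, if_true, singleton_inter, mem_filter, true_and, maxBeforeSecondMax]
  split_ifs with h <;> simp only [h, card_singleton, card_empty, decide_true, decide_false,
    Bool.toNat_true, Bool.toNat_false]

lemma headCount123_finCons_castSucc_castSucc_last (σ : Perm (Fin (n + 2))) :
    headCount123 (Fin.last n).castSucc.castSucc σ = (!maxBeforeSecondMax σ).toNat := by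
  have hsum := headCount132_add_headCount123 (Fin.last n).castSucc.castSucc σ
  simp only [Fin.val_castSucc, Fin.val_last] at hsum
  rw [headCount132_finCons_castSucc_castSucc_last, show n + 2 - (n : ℕ) = 2 by omega] at hsum
  cases h : maxBeforeSecondMax σ <;>
    simp only [h, Bool.toNat_true, Bool.toNat_false, Bool.not_true, Bool.not_false,
      Nat.choose_self] at hsum ⊢ <;>
    omega

lemma three_le_count132_add_count123_finCons (v : Fin (n + 1)) (σ : Perm (Fin n))
    (hv : v + 3 ≤ n) : 3 ≤ count132 (finCons v σ) + count123 (finCons v σ) := by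
  have := three_le_headCount132_add_headCount123 v σ hv
  rw [count132_finCons, count123_finCons]
  omega

def patternStats (σ : Perm (Fin (n + 2))) : ℕ × ℕ × Bool :=
  (count132 σ, count123 σ, maxBeforeSecondMax σ)

lemma patternStats_finCons_last (σ : Perm (Fin (n + 2))) :
    patternStats (finCons (Fin.last (n + 2)) σ) = (count132 σ, count123 σ, true) := by
  rw [patternStats, count132_finCons, count123_finCons, headCount132_eq_zero_of_le _ _ (by simp),
    headCount123_eq_zero_of_le _ _ (by simp), maxBeforeSecondMax_finCons_last, zero_add, zero_add]

lemma patternStats_finCons_castSucc_last (σ : Perm (Fin (n + 2))) :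
    patternStats (finCons (Fin.last (n + 1)).castSucc σ) = (count132 σ, count123 σ, false) := by
  rw [patternStats, count132_finCons, count123_finCons, headCount132_eq_zero_of_le _ _ (by simp),
    headCount123_eq_zero_of_le _ _ (by simp), maxBeforeSecondMax_finCons_castSucc_last, zero_add,
    zero_add]

lemma patternStats_finCons_castSucc_castSucc_last (σ : Perm (Fin (n + 2))) :
    patternStats (finCons (Fin.last n).castSucc.castSucc σ) =
      (count132 σ + (maxBeforeSecondMax σ).toNat, count123 σ + (!maxBeforeSecondMax σ).toNat,
        maxBeforeSecondMax σ) := by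
  rw [patternStats, count132_finCons, count123_finCons,
    headCount132_finCons_castSucc_castSucc_last, headCount123_finCons_castSucc_castSucc_last,
    maxBeforeSecondMax_finCons_of_le _ _ (by simp),
    add_comm, add_comm (count123 σ)]

end Equiv.Perm

namespace PermPatterns

open Equiv Perm

def numPerms (n a b : ℕ) : ℕ :=
  #{σ : Perm (Fin n) | count132 σ = a ∧ count123 σ = b}

def numPermsStats (n : ℕ) (s : ℕ × ℕ × Bool) : ℕ :=
  #{σ : Perm (Fin (n + 2)) | patternStats σ = s}

lemma numPerms_eq_add (n a b : ℕ) :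
    numPerms (n + 2) a b = numPermsStats n (a, b, true) + numPermsStats n (a, b, false) := by
  rw [numPerms, numPermsStats, numPermsStats, ← card_union_of_disjoint, ← filter_or]
  · congr 1
    ext σ
    cases h : maxBeforeSecondMax σ <;> simp [patternStats, h]
  · rw [disjoint_filter]
    intro σ _ h h'
    rw [h] at h'
    simp at h'

lemma numPermsStats_succ {a b : ℕ} (h : a + b ≤ 2) (n : ℕ) (d : Bool) :
    numPermsStats (n + 1) (a, b, d) = numPerms (n + 2) a b +
      #{σ : Perm (Fin (n + 2)) | (count132 σ + (maxBeforeSecondMax σ).toNat,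
        count123 σ + (!maxBeforeSecondMax σ).toNat, maxBeforeSecondMax σ) = (a, b, d)} := by
  change #{σ : Perm (Fin (n + 2 + 1)) | _} = _
  rw [card_filter_eq_sum_finCons, Fin.sum_univ_castSucc, Fin.sum_univ_castSucc,
    Fin.sum_univ_castSucc, sum_eq_zero, zero_add]
  · simp only [patternStats_finCons_castSucc_castSucc_last, patternStats_finCons_castSucc_last,
      patternStats_finCons_last]
    cases d <;> simp [numPerms, add_comm]
  · intro i _
    rw [card_eq_zero, filter_eq_empty_iff]
    intro σ _ hσ
    have := three_le_count132_add_count123_finCons i.castSucc.castSucc.castSucc σ (by simp)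
    simp only [patternStats, Prod.mk.injEq] at hσ
    omega

lemma numPermsStats_succ_true {a b : ℕ} (h : a + b ≤ 2) (n : ℕ) :
    numPermsStats (n + 1) (a, b, true) =
      numPerms (n + 2) a b + if a = 0 then 0 else numPermsStats n (a - 1, b, true) := by
  rw [numPermsStats_succ h, numPermsStats]
  congr 1
  split_ifs with ha
  · rw [card_eq_zero, filter_eq_empty_iff]
    intro σ _
    cases maxBeforeSecondMax σ <;> simp [ha]
  · congr 1
    ext σ
    simp only [mem_filter, mem_univ, true_and, patternStats, Prod.mk.injEq]
    cases maxBeforeSecondMax σ <;> simp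
    omega

lemma numPermsStats_succ_false {a b : ℕ} (h : a + b ≤ 2) (n : ℕ) :
    numPermsStats (n + 1) (a, b, false) =
      numPerms (n + 2) a b + if b = 0 then 0 else numPermsStats n (a, b - 1, false) := by
  rw [numPermsStats_succ h, numPermsStats]
  congr 1
  split_ifs with hb
  · rw [card_eq_zero, filter_eq_empty_iff]
    intro σ _
    cases maxBeforeSecondMax σ <;> simp [hb]
  · congr 1
    ext σ
    simp only [mem_filter, mem_univ, true_and, patternStats, Prod.mk.injEq]
    cases maxBeforeSecondMax σ <;> simp
    omega

lemma numPermsStats_zero_zero (n : ℕ) (d : Bool) : numPermsStats n (0, 0, d) = 2 ^ n := by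
  induction n generalizing d with
  | zero => cases d <;> decide
  | succ n ih =>
    cases d
    · rw [numPermsStats_succ_false (by norm_num), if_pos rfl, numPerms_eq_add, ih, ih]
      ring
    · rw [numPermsStats_succ_true (by norm_num), if_pos rfl, numPerms_eq_add, ih, ih]
      ring

lemma numPerms_one_zero (n : ℕ) : numPerms (n + 3) 1 0 = (n + 1) * 2 ^ n := by
  have step (m : ℕ) : numPerms (m + 3) 1 0 = 2 * numPerms (m + 2) 1 0 + 2 ^ m := by
    rw [numPerms_eq_add, numPermsStats_succ_true (by norm_num),
      numPermsStats_succ_false (by norm_num), numPermsStats_zero_zero]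
    simp only [one_ne_zero, if_false, if_true]
    ring
  induction n with
  | zero => rw [step, show numPerms 2 1 0 = 0 by decide]; norm_num
  | succ n ih => rw [step, ih]; ring

lemma numPerms_zero_one (n : ℕ) : numPerms (n + 3) 0 1 = (n + 1) * 2 ^ n := by
  have step (m : ℕ) : numPerms (m + 3) 0 1 = 2 * numPerms (m + 2) 0 1 + 2 ^ m := by
    rw [numPerms_eq_add, numPermsStats_succ_true (by norm_num),
      numPermsStats_succ_false (by norm_num), numPermsStats_zero_zero]
    simp only [one_ne_zero, if_false, if_true]
    ring
  induction n with
  | zero => rw [step, show numPerms 2 0 1 = 0 by decide]; norm_num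
  | succ n ih => rw [step, ih]; ring

lemma numPerms_one_one_succ (n : ℕ) :
    numPerms (n + 4) 1 1 =
      2 * numPerms (n + 3) 1 1 + numPerms (n + 2) 0 1 + numPerms (n + 2) 1 0 := by
  rw [numPerms_eq_add, numPermsStats_succ_true (by norm_num),
    numPermsStats_succ_false (by norm_num), numPermsStats_succ_true (by norm_num),
    numPermsStats_succ_false (by norm_num)]
  simp only [one_ne_zero, if_false, if_true, tsub_self]
  ring

lemma numPerms_one_one (n : ℕ) : numPerms (n + 5) 1 1 = 2 ^ (n + 1) * (n + 2).choose 2 := by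
  induction n with
  | zero =>
    rw [numPerms_one_one_succ, numPerms_one_one_succ, numPerms_zero_one, numPerms_one_zero,
      show numPerms 3 1 1 = 0 by decide, show numPerms 2 0 1 = 0 by decide,
      show numPerms 2 1 0 = 0 by decide]
    norm_num
  | succ n ih =>
    have pascal : (n + 1 + 2).choose 2 = (n + 2).choose 2 + (n + 2) := by
      rw [show n + 1 + 2 = n + 2 + 1 from rfl, Nat.choose_succ_succ', Nat.choose_one_right,
        add_comm]
    rw [numPerms_one_one_succ, ih, numPerms_zero_one, numPerms_one_zero, pascal]
    ring

lemma B_eq_numPerms (n : ℕ) : B n = numPerms n 1 1 := rfl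

lemma numPerms_one_one_of_lt {n : ℕ} (hn : n < 5) : numPerms n 1 1 = 0 := by
  interval_cases n
  · decide
  · decide
  · decide
  · decide
  · exact (numPerms_one_one_succ 0).trans (by decide)

end PermPatterns

lemma PowerSeries.mk_eq_X_pow_mul_mk {R : Type*} [Semiring R] (f : ℕ → R) (k : ℕ)
    (hf : ∀ n < k, f n = 0) : mk f = X ^ k * mk fun n => f (n + k) := by
  ext n
  rw [coeff_X_pow_mul', coeff_mk, coeff_mk]
  split_ifs with hn
  · rw [Nat.sub_add_cancel hn]
  · exact hf n (by omega)

open PowerSeries PermPatterns in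
theorem genfun_one132_1 :
    (1 - 2 * PowerSeries.X) ^ 3 * PowerSeries.mk (fun n => (B n : ℚ)) = 2 * PowerSeries.X ^ 5 := by
  have hB : mk (fun n => (B n : ℚ)) =
      X ^ 5 * (2 * rescale 2 (mk fun m => ((2 + m).choose 2 : ℚ))) := by
    rw [mk_eq_X_pow_mul_mk _ 5 fun n hn => by simp [B_eq_numPerms, numPerms_one_one_of_lt hn],
      rescale_mk, ← map_ofNat C 2, ← smul_eq_C_mul]
    congr 1
    ext m
    simp [B_eq_numPerms, numPerms_one_one, add_comm 2 m]
    ring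
  have hX : (1 - 2 * X : ℚ⟦X⟧) = rescale 2 (1 - X) := by
    rw [map_sub, map_one, rescale_X, map_ofNat]
  calc (1 - 2 * X : ℚ⟦X⟧) ^ 3 * mk (fun n => (B n : ℚ))
      = 2 * X ^ 5 *
          rescale 2 (PowerSeries.mk (fun m => ((2 + m).choose 2 : ℚ)) * (1 - X) ^ 3) := by
        rw [hB, hX, map_mul, map_pow]
        ring
    _ = 2 * X ^ 5 := by
        rw [mk_add_choose_mul_one_sub_pow_eq_one, map_one, mul_one]
end
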